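/- arXiv:2109.12672 — 2 statements merged into one kernel-verified Lean document; each statement's English description precedes it below -/
import Mathlib

section
/- Let k be an algebraically closed field of characteristic zero and let z₁,…,z₆ ∈ ℙ²(k) be six distinct points, no three collinear, forming a star-free configuration: there is no point p ∈ ℙ²(k) outside {z₁,…,z₆} and no partition of {z₁,…,z₆} into three pairs such that the three lines spanned by the pairs all pass through p. Let Λ be any line in ℙ²(k). Then the set of intersection points Λ ∩ ℓ, as ℓ ranges over the 15 lines spanned by pairs of the points z₁,…,z₆ with ℓ ≠ Λ, contains at least 5 distinct points of Λ. -/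
open Submodule Module

section SFAux

variable {k : Type} [Field k]

lemma sf_pair_indep {x y : Fin 3 → k} (hx : x ≠ 0) (hy : y ≠ 0)
    (hxy : Submodule.span k {x} ≠ Submodule.span k {y}) : LinearIndependent k ![x, y] := by
  rw [linearIndependent_fin2]
  refine ⟨by simpa using hy, fun a h => ?_⟩
  simp only [Matrix.cons_val_one, Matrix.head_cons, Matrix.cons_val_zero] at h
  have ha : a ≠ 0 := by rintro rfl; simp at h; exact hx h.symm
  exact hxy (by rw [← h]; exact Submodule.span_singleton_smul_eq (ha.isUnit) y)

omit [Field k] in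
lemma sf_range_pair (x y : Fin 3 → k) : Set.range ![x, y] = {x, y} := by
  ext w; simp [Fin.exists_fin_two]; tauto

lemma sf_finrank_pair {x y : Fin 3 → k} (h : LinearIndependent k ![x, y]) :
    finrank k (span k {x, y} : Submodule k (Fin 3 → k)) = 2 := by
  have := finrank_span_eq_card h
  rwa [sf_range_pair, Fintype.card_fin] at this

lemma sf_notMem_span_pair {x y w : Fin 3 → k} (h : LinearIndependent k ![x, y, w]) :
    w ∉ span k {x, y} := by
  have h2 := h.notMem_span_image (s := ({0, 1} : Set (Fin 3))) (x := 2) (by decide)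
  simpa [Set.image_pair] using h2

lemma sf_inf_line (Λ ℓ : Submodule k (Fin 3 → k)) (hΛ : finrank k Λ = 2)
    (hl : finrank k ℓ = 2) (hne : ℓ ≠ Λ) : ∃ q, q ≠ 0 ∧ Λ ⊓ ℓ = span k {q} := by
  have htop : finrank k (Fin 3 → k) = 3 := by simp
  have hsle : finrank k ↥(Λ ⊔ ℓ) ≤ 3 := le_trans (Submodule.finrank_le _) (le_of_eq htop)
  have hmono : finrank k Λ ≤ finrank k ↥(Λ ⊔ ℓ) := Submodule.finrank_mono le_sup_left
  have hsup : finrank k ↥(Λ ⊔ ℓ) = 3 := by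
    rcases Nat.lt_or_ge (finrank k ↥(Λ ⊔ ℓ)) 3 with h | h
    · exfalso
      have e1 : Λ = Λ ⊔ ℓ := Submodule.eq_of_le_of_finrank_eq le_sup_left (by omega)
      have e2 : ℓ = Λ ⊔ ℓ := Submodule.eq_of_le_of_finrank_eq le_sup_right (by omega)
      exact hne (e2.trans e1.symm)
    · omega
  have hinf : finrank k ↥(Λ ⊓ ℓ) = 1 := by
    have := Submodule.finrank_sup_add_finrank_inf_eq Λ ℓ
    omega
  have hnb : Λ ⊓ ℓ ≠ ⊥ := by
    intro h; rw [h] at hinf; simp at hinf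
  obtain ⟨q, hqm, hq0⟩ := Submodule.ne_bot_iff _ |>.mp hnb
  refine ⟨q, hq0, ?_⟩
  refine (Submodule.eq_of_le_of_finrank_eq ?_ ?_).symm
  · rwa [Submodule.span_singleton_le_iff_mem]
  · rw [finrank_span_singleton hq0, hinf]

end SFAux

lemma sf_count15 : (Finset.univ.filter (fun p : Fin 6 × Fin 6 => p.1 < p.2)).card = 15 := by
  decide

lemma sf_count5 : ∀ a : Fin 6,
    (Finset.univ.filter (fun p : Fin 6 × Fin 6 => p.1 < p.2 ∧ (p.1 = a ∨ p.2 = a))).card = 5 := by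
  decide

lemma sf_count4 : ∀ a b c : Fin 6, a ≠ b → (c = a ∨ c = b) →
    (Finset.univ.filter (fun p : Fin 6 × Fin 6 =>
      p.1 < p.2 ∧ (p.1 = c ∨ p.2 = c) ∧ ¬(p = (a, b) ∨ p = (b, a)))).card ≤ 4 := by
  decide

set_option maxRecDepth 4000 in
lemma sf_vec_inj {α : Type} {a b c d e f : α}
    (h1 : a ≠ b) (h2 : a ≠ c) (h3 : a ≠ d) (h4 : a ≠ e) (h5 : a ≠ f)
    (h6 : b ≠ c) (h7 : b ≠ d) (h8 : b ≠ e) (h9 : b ≠ f)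
    (h10 : c ≠ d) (h11 : c ≠ e) (h12 : c ≠ f)
    (h13 : d ≠ e) (h14 : d ≠ f) (h15 : e ≠ f) :
    Function.Injective ![a, b, c, d, e, f] := by
  intro x y hxy
  fin_cases x <;> fin_cases y <;>
    simp only [Matrix.cons_val_zero, Matrix.cons_val_one, Matrix.head_cons,
      Matrix.cons_val_succ] at hxy <;>
    first | rfl | (exact absurd hxy (by assumption)) | (exact absurd hxy.symm (by assumption))


/-- A configuration of six pairwise distinct points of `ℙ²(k)` (given by nonzero vectors
`z i ∈ k³`), no three collinear, is *star-free* if no point of `ℙ²(k)` outside the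
configuration lies on the three lines spanned by some partition of the six points into
three pairs. -/
def IsStarFree {k : Type} [Field k] (z : Fin 6 → Fin 3 → k) : Prop :=
  ¬ ∃ q : Fin 3 → k, q ≠ 0 ∧ (∀ i, q ∉ Submodule.span k {z i}) ∧
      ∃ e : Equiv.Perm (Fin 6),
        q ∈ Submodule.span k {z (e 0), z (e 1)} ∧
        q ∈ Submodule.span k {z (e 2), z (e 3)} ∧
        q ∈ Submodule.span k {z (e 4), z (e 5)}

/-- For a star-free configuration of six points, no three collinear, and any line `Λ` in
`ℙ²(k)`, the intersections of `Λ` with the 15 connecting lines of the configuration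
(other than `Λ` itself) produce at least 5 distinct points of `Λ`. -/
theorem starFree_five_intersection_points
    (k : Type) [Field k] [IsAlgClosed k] [CharZero k]
    (z : Fin 6 → Fin 3 → k) (hz : ∀ i, z i ≠ 0)
    (hdist : ∀ i j : Fin 6, Submodule.span k {z i} = Submodule.span k {z j} → i = j)
    (hcol : ∀ i j l : Fin 6, i ≠ j → j ≠ l → i ≠ l →
      LinearIndependent k ![z i, z j, z l])
    (hstar : IsStarFree z)
    (Λ : Submodule k (Fin 3 → k)) (hΛ : Module.finrank k Λ = 2) :
    5 ≤ Set.ncard {P : Submodule k (Fin 3 → k) |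
        ∃ i j : Fin 6, i ≠ j ∧ Submodule.span k {z i, z j} ≠ Λ ∧
          P = Λ ⊓ Submodule.span k {z i, z j}} := by
  classical
  by_contra hcon
  push_neg at hcon
  -- basic facts
  have hzm1 : ∀ i j : Fin 6, z i ∈ Submodule.span k {z i, z j} :=
    fun i j => Submodule.subset_span (Set.mem_insert _ _)
  have hzm2 : ∀ i j : Fin 6, z j ∈ Submodule.span k {z i, z j} :=
    fun i j => Submodule.subset_span (Set.mem_insert_of_mem _ rfl)
  have hpind : ∀ i j : Fin 6, i ≠ j → LinearIndependent k ![z i, z j] :=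
    fun i j hij => sf_pair_indep (hz i) (hz j) (fun h => hij (hdist i j h))
  have hrk : ∀ i j : Fin 6, i ≠ j →
      Module.finrank k (Submodule.span k {z i, z j} : Submodule k (Fin 3 → k)) = 2 :=
    fun i j hij => sf_finrank_pair (hpind i j hij)
  have hnm : ∀ i j l : Fin 6, i ≠ j → j ≠ l → i ≠ l →
      z l ∉ Submodule.span k {z i, z j} :=
    fun i j l h1 h2 h3 => sf_notMem_span_pair (hcol i j l h1 h2 h3)
  -- injectivity of ordered pairs ↦ lines
  have hLinj : ∀ p q : Fin 6 × Fin 6, p.1 < p.2 → q.1 < q.2 →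
      Submodule.span k {z p.1, z p.2} = Submodule.span k {z q.1, z q.2} → p = q := by
    rintro ⟨i, j⟩ ⟨i', j'⟩ h h' heq
    simp only at h h' heq ⊢
    have hij : i ≠ j := ne_of_lt h
    have c1 : i' = i ∨ i' = j := by
      by_contra hc
      push_neg at hc
      exact hnm i j i' hij (Ne.symm hc.2) (Ne.symm hc.1) (heq ▸ hzm1 i' j')
    have c2 : j' = i ∨ j' = j := by
      by_contra hc
      push_neg at hc
      exact hnm i j j' hij (Ne.symm hc.2) (Ne.symm hc.1) (heq ▸ hzm2 i' j')
    rcases c1 with rfl | rfl <;> rcases c2 with rfl | rfl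
    · exact absurd h' (lt_irrefl _)
    · rfl
    · exact absurd h (lt_asymm h')
    · exact absurd h' (lt_irrefl _)
  -- the finsets
  set base : Finset (Fin 6 × Fin 6) := Finset.univ.filter (fun p => p.1 < p.2) with hbase
  have hbcard : base.card = 15 := sf_count15
  set T : Finset (Fin 6 × Fin 6) :=
    base.filter (fun p => ¬ (Submodule.span k {z p.1, z p.2} = Λ)) with hTdef
  set E : Finset (Fin 6 × Fin 6) :=
    base.filter (fun p => Submodule.span k {z p.1, z p.2} = Λ) with hEdef
  set F : Fin 6 × Fin 6 → Submodule k (Fin 3 → k) :=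
    fun p => Λ ⊓ Submodule.span k {z p.1, z p.2} with hFdef
  set I : Finset (Submodule k (Fin 3 → k)) := T.image F with hIdef
  have hTmem : ∀ p : Fin 6 × Fin 6, p ∈ T ↔
      (p.1 < p.2 ∧ Submodule.span k {z p.1, z p.2} ≠ Λ) := by
    intro p
    rw [hTdef, Finset.mem_filter, hbase, Finset.mem_filter]
    simp only [Finset.mem_univ, true_and]
  have hET : E.card + T.card = 15 := by
    rw [← hbcard, hEdef, hTdef]
    exact Finset.card_filter_add_card_filter_not _
  clear_value base T E F I
  have hFval : ∀ p : Fin 6 × Fin 6, F p = Λ ⊓ Submodule.span k {z p.1, z p.2} := by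
    intro p; rw [hFdef]
  -- the set in question is the coercion of I
  have hSI : {P : Submodule k (Fin 3 → k) |
      ∃ i j : Fin 6, i ≠ j ∧ Submodule.span k {z i, z j} ≠ Λ ∧
        P = Λ ⊓ Submodule.span k {z i, z j}} = ↑I := by
    ext P
    simp only [Set.mem_setOf_eq, Finset.mem_coe]
    rw [hIdef, Finset.mem_image]
    constructor
    · rintro ⟨i, j, hij, hne, rfl⟩
      rcases hij.lt_or_gt with h | h
      · exact ⟨(i, j), (hTmem (i, j)).mpr ⟨h, hne⟩, hFval (i, j)⟩
      · have hc : ({z j, z i} : Set (Fin 3 → k)) = {z i, z j} := Set.pair_comm _ _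
        refine ⟨(j, i), (hTmem (j, i)).mpr ⟨h, ?_⟩, ?_⟩
        · show Submodule.span k {z j, z i} ≠ Λ
          rw [hc]; exact hne
        · rw [hFval (j, i)]
          show Λ ⊓ Submodule.span k {z j, z i} = Λ ⊓ Submodule.span k {z i, z j}
          rw [hc]
    · rintro ⟨p, hp, rfl⟩
      obtain ⟨hlt, hne⟩ := (hTmem p).mp hp
      exact ⟨p.1, p.2, ne_of_lt hlt, hne, hFval p⟩
  rw [hSI, Set.ncard_coe_finset] at hcon
  have hI4 : I.card ≤ 4 := by omega
  have hE1 : E.card ≤ 1 := by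
    refine Finset.card_le_one.mpr ?_
    intro p hp q hq
    rw [hEdef, Finset.mem_filter, hbase, Finset.mem_filter] at hp hq
    exact hLinj p q hp.1.2 hq.1.2 (hp.2.trans hq.2.symm)
  -- data for each P ∈ I
  have hPdata : ∀ P ∈ I, ∃ q : Fin 3 → k, q ≠ 0 ∧ P = Submodule.span k {q} ∧ q ∈ Λ ∧
      ∀ p ∈ T, F p = P → q ∈ Submodule.span k {z p.1, z p.2} := by
    intro P hP
    rw [hIdef, Finset.mem_image] at hP
    obtain ⟨p₀, hp₀, hFp₀⟩ := hP
    obtain ⟨hlt, hne⟩ := (hTmem p₀).mp hp₀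
    obtain ⟨q, hq0, hqeq⟩ :=
      sf_inf_line Λ (Submodule.span k {z p₀.1, z p₀.2}) hΛ (hrk _ _ (ne_of_lt hlt)) hne
    have hPeq : P = Submodule.span k {q} := by
      rw [← hFp₀, hFval p₀, hqeq]
    have hqP : q ∈ P := by
      rw [hPeq]; exact Submodule.mem_span_singleton_self q
    refine ⟨q, hq0, hPeq, ?_, ?_⟩
    · have hq' : q ∈ Λ ⊓ Submodule.span k {z p₀.1, z p₀.2} := by
        rw [hqeq, ← hPeq]; exact hqP
      exact hq'.1
    · intro p hp hFp
      have hq2 : q ∈ Λ ⊓ Submodule.span k {z p.1, z p.2} := by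
        rw [← hFval p, hFp]; exact hqP
      exact hq2.2
  -- type A points are spans of configuration points inside Λ
  have hAspan : ∀ P ∈ I, ∀ a : Fin 6, z a ∈ P →
      P = Submodule.span k {z a} ∧ z a ∈ Λ := by
    intro P hP a ha
    obtain ⟨q, hq0, hPq, hqΛ, -⟩ := hPdata P hP
    rw [hPq] at ha
    obtain ⟨c, hc⟩ := Submodule.mem_span_singleton.mp ha
    have hc0 : c ≠ 0 := by rintro rfl; simp at hc; exact hz a hc.symm
    constructor
    · rw [hPq, ← hc]
      exact (Submodule.span_singleton_smul_eq hc0.isUnit q).symm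
    · rw [← hc]; exact Λ.smul_mem c hqΛ
  -- configuration points on Λ
  set Af : Finset (Fin 6) := Finset.univ.filter (fun a => z a ∈ Λ) with hAfdef
  have hAfmem : ∀ a : Fin 6, a ∈ Af ↔ z a ∈ Λ := by
    intro a
    rw [hAfdef, Finset.mem_filter]
    simp only [Finset.mem_univ, true_and]
  clear_value Af
  have hAf2 : Af.card ≤ 2 := by
    by_contra hcc
    push_neg at hcc
    obtain ⟨a, ha, b, hb, c, hc, hab, hac, hbc⟩ := Finset.two_lt_card.mp hcc
    have hza := (hAfmem a).mp ha
    have hzb := (hAfmem b).mp hb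
    have hzc := (hAfmem c).mp hc
    have hsub : Submodule.span k {z a, z b} ≤ Λ := by
      rw [Submodule.span_le]
      rintro x (rfl | rfl)
      exacts [hza, hzb]
    have heq : Submodule.span k {z a, z b} = Λ :=
      Submodule.eq_of_le_of_finrank_eq hsub (by rw [hΛ]; exact hrk a b hab)
    exact hnm a b c hab hbc hac (heq ▸ hzc)
  -- fiber bound for type B points
  have hfibB : ∀ P ∈ I, (¬ ∃ a, z a ∈ P) →
      (T.filter (fun p => F p = P)).card ≤ 2 := by
    intro P hP hB
    by_contra hcc
    push_neg at hcc
    obtain ⟨p1, hp1, p2, hp2, p3, hp3, h12, h13, h23⟩ := Finset.two_lt_card.mp hcc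
    obtain ⟨q, hq0, hPq, hqΛ, hqmem⟩ := hPdata P hP
    have hns : ∀ a : Fin 6, q ∉ Submodule.span k {z a} := by
      intro a hqa
      obtain ⟨c, hc'⟩ := Submodule.mem_span_singleton.mp hqa
      have hc0 : c ≠ 0 := by rintro rfl; simp at hc'; exact hq0 hc'.symm
      refine hB ⟨a, ?_⟩
      rw [hPq]
      exact Submodule.mem_span_singleton.mpr
        ⟨c⁻¹, by rw [← hc', smul_smul, inv_mul_cancel₀ hc0, one_smul]⟩
    have hdat : ∀ p, p ∈ T.filter (fun p => F p = P) →
        p.1 < p.2 ∧ Submodule.span k {z p.1, z p.2} ≠ Λ ∧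
          q ∈ Submodule.span k {z p.1, z p.2} := by
      intro p hp
      obtain ⟨hpT, hfp⟩ := Finset.mem_filter.mp hp
      obtain ⟨hlt, hne⟩ := (hTmem p).mp hpT
      exact ⟨hlt, hne, hqmem p hpT hfp⟩
    have hshare : ∀ p p', p ∈ T.filter (fun p => F p = P) →
        p' ∈ T.filter (fun p => F p = P) → ∀ a : Fin 6,
        (a = p.1 ∨ a = p.2) → (a = p'.1 ∨ a = p'.2) →
        Submodule.span k {z p.1, z p.2} = Submodule.span k {z p'.1, z p'.2} := by
      intro p p' hp hp' a hap hap'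
      have hqa : LinearIndependent k ![q, z a] := by
        rw [linearIndependent_fin2]
        refine ⟨by simpa using hz a, fun c hcq => hns a ?_⟩
        simp only [Matrix.cons_val_one, Matrix.head_cons, Matrix.cons_val_zero] at hcq
        exact Submodule.mem_span_singleton.mpr ⟨c, hcq⟩
      have hfr : Module.finrank k (Submodule.span k {q, z a} : Submodule k (Fin 3 → k)) = 2 :=
        sf_finrank_pair hqa
      have key : ∀ r, r ∈ T.filter (fun p => F p = P) → (a = r.1 ∨ a = r.2) →
          Submodule.span k {q, z a} = Submodule.span k {z r.1, z r.2} := by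
        intro r hr har
        have hzar : z a ∈ Submodule.span k {z r.1, z r.2} := by
          rcases har with rfl | rfl
          exacts [hzm1 _ _, hzm2 _ _]
        have hsub : Submodule.span k {q, z a} ≤ Submodule.span k {z r.1, z r.2} := by
          rw [Submodule.span_le]
          rintro x (rfl | rfl)
          exacts [(hdat r hr).2.2, hzar]
        exact Submodule.eq_of_le_of_finrank_eq hsub
          (by rw [hfr, hrk _ _ (ne_of_lt (hdat r hr).1)])
      exact (key p hp hap).symm.trans (key p' hp' hap')
    have hdisj : ∀ p p', p ∈ T.filter (fun p => F p = P) →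
        p' ∈ T.filter (fun p => F p = P) → p ≠ p' →
        p.1 ≠ p'.1 ∧ p.1 ≠ p'.2 ∧ p.2 ≠ p'.1 ∧ p.2 ≠ p'.2 := by
      intro p p' hp hp' hne
      have hLne : Submodule.span k {z p.1, z p.2} ≠ Submodule.span k {z p'.1, z p'.2} :=
        fun h => hne (hLinj p p' (hdat p hp).1 (hdat p' hp').1 h)
      refine ⟨fun h => hLne (hshare p p' hp hp' p.1 (Or.inl rfl) (Or.inl h)),
        fun h => hLne (hshare p p' hp hp' p.1 (Or.inl rfl) (Or.inr h)),
        fun h => hLne (hshare p p' hp hp' p.2 (Or.inr rfl) (Or.inl h)),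
        fun h => hLne (hshare p p' hp hp' p.2 (Or.inr rfl) (Or.inr h))⟩
    obtain ⟨d1, d2, d3, d4⟩ := hdisj p1 p2 hp1 hp2 h12
    obtain ⟨e1, e2, e3, e4⟩ := hdisj p1 p3 hp1 hp3 h13
    obtain ⟨f1, f2, f3, f4⟩ := hdisj p2 p3 hp2 hp3 h23
    have o1 : p1.1 ≠ p1.2 := ne_of_lt (hdat p1 hp1).1
    have o2 : p2.1 ≠ p2.2 := ne_of_lt (hdat p2 hp2).1
    have o3 : p3.1 ≠ p3.2 := ne_of_lt (hdat p3 hp3).1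
    have hginj : Function.Injective ![p1.1, p1.2, p2.1, p2.2, p3.1, p3.2] :=
      sf_vec_inj o1 d1 d2 e1 e2 d3 d4 e3 e4 o2 f1 f2 f3 f4 o3
    have hbij := Finite.injective_iff_bijective.mp hginj
    have hm1 := (hdat p1 hp1).2.2
    have hm2 := (hdat p2 hp2).2.2
    have hm3 := (hdat p3 hp3).2.2
    refine hstar ⟨q, hq0, hns, Equiv.ofBijective _ hbij, ?_, ?_, ?_⟩
    · have hg0 : (Equiv.ofBijective _ hbij) 0 = p1.1 := rfl
      have hg1 : (Equiv.ofBijective _ hbij) 1 = p1.2 := rfl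
      rw [hg0, hg1]; exact hm1
    · have hg2 : (Equiv.ofBijective _ hbij) 2 = p2.1 := rfl
      have hg3 : (Equiv.ofBijective _ hbij) 3 = p2.2 := rfl
      rw [hg2, hg3]; exact hm2
    · have hg4 : (Equiv.ofBijective _ hbij) 4 = p3.1 := rfl
      have hg5 : (Equiv.ofBijective _ hbij) 5 = p3.2 := rfl
      rw [hg4, hg5]; exact hm3
  -- fiber structure for type A points
  have hfibA : ∀ P ∈ I, ∀ a : Fin 6, z a ∈ P →
      ∀ p ∈ T.filter (fun p => F p = P), p.1 < p.2 ∧ (p.1 = a ∨ p.2 = a) := by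
    intro P hP a ha p hp
    obtain ⟨hpT, hfp⟩ := Finset.mem_filter.mp hp
    obtain ⟨hlt, hne⟩ := (hTmem p).mp hpT
    refine ⟨hlt, ?_⟩
    have ha' : z a ∈ Λ ⊓ Submodule.span k {z p.1, z p.2} := by
      rw [← hFval p, hfp]; exact ha
    by_contra hcc
    push_neg at hcc
    exact hnm p.1 p.2 a (ne_of_lt hlt) hcc.2 hcc.1 ha'.2
  -- choice of a configuration point for type A points
  have haPex : ∀ P : Submodule k (Fin 3 → k), ∃ a : Fin 6, (∃ b, z b ∈ P) → z a ∈ P := by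
    intro P
    by_cases h : ∃ b, z b ∈ P
    · obtain ⟨b, hb⟩ := h; exact ⟨b, fun _ => hb⟩
    · exact ⟨0, fun hc => absurd hc h⟩
  choose aP haP using haPex
  -- splitting I
  set IA : Finset (Submodule k (Fin 3 → k)) := I.filter (fun P => ∃ a, z a ∈ P) with hIAdef
  set IB : Finset (Submodule k (Fin 3 → k)) := I.filter (fun P => ¬ ∃ a, z a ∈ P) with hIBdef
  have hIcard : IA.card + IB.card = I.card := by
    rw [hIAdef, hIBdef]
    exact Finset.card_filter_add_card_filter_not _
  have hfibsum : T.card = ∑ P ∈ I, (T.filter (fun p => F p = P)).card := by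
    rw [hIdef]
    exact Finset.card_eq_sum_card_fiberwise (fun p hp => Finset.mem_image_of_mem F hp)
  have hsplit : T.card = (∑ P ∈ IA, (T.filter (fun p => F p = P)).card)
      + ∑ P ∈ IB, (T.filter (fun p => F p = P)).card := by
    rw [hfibsum, hIAdef, hIBdef]
    exact (Finset.sum_filter_add_sum_filter_not I _ _).symm
  have hIAmem : ∀ P ∈ IA, P ∈ I ∧ ∃ a, z a ∈ P := by
    intro P hP
    rw [hIAdef, Finset.mem_filter] at hP
    exact hP
  have hIBmem : ∀ P ∈ IB, P ∈ I ∧ ¬ ∃ a, z a ∈ P := by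
    intro P hP
    rw [hIBdef, Finset.mem_filter] at hP
    exact hP
  clear_value IA IB
  have hBsum : (∑ P ∈ IB, (T.filter (fun p => F p = P)).card) ≤ 2 * IB.card := by
    have := Finset.sum_le_card_nsmul IB (fun P => (T.filter (fun p => F p = P)).card) 2
      (fun P hP => hfibB P (hIBmem P hP).1 (hIBmem P hP).2)
    simpa [mul_comm] using this
  have hmapsto : ∀ P ∈ IA, aP P ∈ Af := by
    intro P hP
    obtain ⟨hPI, hex⟩ := hIAmem P hP
    exact (hAfmem _).mpr (hAspan P hPI _ (haP P hex)).2
  have hinjA : Set.InjOn aP ↑IA := by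
    intro P hP Q hQ h
    obtain ⟨hPI, hexP⟩ := hIAmem P (Finset.mem_coe.mp hP)
    obtain ⟨hQI, hexQ⟩ := hIAmem Q (Finset.mem_coe.mp hQ)
    rw [(hAspan P hPI _ (haP P hexP)).1, (hAspan Q hQI _ (haP Q hexQ)).1, h]
  have hcA : IA.card ≤ Af.card := Finset.card_le_card_of_injOn aP hmapsto hinjA
  -- case split on Af.card
  rcases Nat.lt_or_ge Af.card 2 with hAfcase | hAfcase
  · -- Af.card ≤ 1 : E is empty and type A fibers have card ≤ 5
    have hEempty : E.card = 0 := by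
      by_contra hEne
      obtain ⟨p, hp⟩ := Finset.card_pos.mp (Nat.pos_of_ne_zero hEne)
      rw [hEdef, Finset.mem_filter, hbase, Finset.mem_filter] at hp
      obtain ⟨⟨-, hlt⟩, hep⟩ := hp
      have h1 : p.1 ∈ Af := (hAfmem _).mpr (hep ▸ hzm1 p.1 p.2)
      have h2 : p.2 ∈ Af := (hAfmem _).mpr (hep ▸ hzm2 p.1 p.2)
      have : 1 < Af.card := Finset.one_lt_card.mpr ⟨p.1, h1, p.2, h2, ne_of_lt hlt⟩
      omega
    have hAsum : (∑ P ∈ IA, (T.filter (fun p => F p = P)).card) ≤ 5 * IA.card := by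
      have h5 : ∀ P ∈ IA, (T.filter (fun p => F p = P)).card ≤ 5 := by
        intro P hP
        obtain ⟨hPI, hex⟩ := hIAmem P hP
        have hsub : T.filter (fun p => F p = P) ⊆
            Finset.univ.filter (fun p : Fin 6 × Fin 6 =>
              p.1 < p.2 ∧ (p.1 = aP P ∨ p.2 = aP P)) := by
          intro p hp
          refine Finset.mem_filter.mpr ⟨Finset.mem_univ _, ?_⟩
          exact hfibA P hPI _ (haP P hex) p hp
        calc (T.filter (fun p => F p = P)).card ≤ _ := Finset.card_le_card hsub
          _ = 5 := sf_count5 _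
      have := Finset.sum_le_card_nsmul IA (fun P => (T.filter (fun p => F p = P)).card) 5 h5
      simpa [mul_comm] using this
    omega
  · -- Af.card = 2 : Λ is a connecting line, type A fibers have card ≤ 4
    have hAfeq : Af.card = 2 := le_antisymm hAf2 hAfcase
    obtain ⟨a, b, hab, hABset⟩ := Finset.card_eq_two.mp hAfeq
    have hza : z a ∈ Λ := (hAfmem a).mp (by rw [hABset]; simp)
    have hzb : z b ∈ Λ := (hAfmem b).mp (by rw [hABset]; simp)
    have hsub : Submodule.span k {z a, z b} ≤ Λ := by
      rw [Submodule.span_le]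
      rintro x (rfl | rfl)
      exacts [hza, hzb]
    have hΛab : Submodule.span k {z a, z b} = Λ :=
      Submodule.eq_of_le_of_finrank_eq hsub (by rw [hΛ]; exact hrk a b hab)
    have hAsum : (∑ P ∈ IA, (T.filter (fun p => F p = P)).card) ≤ 4 * IA.card := by
      have h4 : ∀ P ∈ IA, (T.filter (fun p => F p = P)).card ≤ 4 := by
        intro P hP
        obtain ⟨hPI, hex⟩ := hIAmem P hP
        have hcmem : aP P = a ∨ aP P = b := by
          have := hmapsto P hP
          rw [hABset] at this
          simpa using this
        have hsub2 : T.filter (fun p => F p = P) ⊆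
            Finset.univ.filter (fun p : Fin 6 × Fin 6 =>
              p.1 < p.2 ∧ (p.1 = aP P ∨ p.2 = aP P) ∧ ¬(p = (a, b) ∨ p = (b, a))) := by
          intro p hp
          obtain ⟨hlt, hor⟩ := hfibA P hPI _ (haP P hex) p hp
          refine Finset.mem_filter.mpr ⟨Finset.mem_univ _, hlt, hor, ?_⟩
          obtain ⟨hpT, -⟩ := Finset.mem_filter.mp hp
          obtain ⟨-, hne⟩ := (hTmem p).mp hpT
          rintro (rfl | rfl)
          · exact hne hΛab
          · refine hne ?_
            show Submodule.span k {z b, z a} = Λ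
            rw [Set.pair_comm (z b) (z a)]
            exact hΛab
        calc (T.filter (fun p => F p = P)).card ≤ _ := Finset.card_le_card hsub2
          _ ≤ 4 := sf_count4 a b (aP P) hab hcmem
      have := Finset.sum_le_card_nsmul IA (fun P => (T.filter (fun p => F p = P)).card) 4 h4
      simpa [mul_comm] using this
    omega
end

section
/- Let k be an algebraically closed field of characteristic zero and let z₁,…,z₆ ∈ ℙ²(k) be six distinct points, no three collinear, forming a star-free configuration: there is no point p ∈ ℙ²(k) outside {z₁,…,z₆} and no partition of {z₁,…,z₆} into three pairs such that the three lines spanned by the pairs all pass through p. Then for every point p ∈ ℙ²(k), the set of lines joining p to the points zᵢ distinct from p (i.e. the set {span(p, zᵢ) : zᵢ ≠ p}) has at least 4 elements. Equivalently, the linear projection away from any point p maps the points of the configuration distinct from p to at least 4 distinct images. -/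
open Submodule

theorem exists_prod_fin_two_equiv_of_ncard_fiber_le_two {α β : Type*} [Finite α] {n : ℕ}
    (f : α → β) (hα : Nat.card α = n * 2) (hrange : (Set.range f).ncard ≤ n)
    (hfiber : ∀ b, (f ⁻¹' {b}).ncard ≤ 2) :
    ∃ e : Fin n × Fin 2 ≃ α, ∀ i, f (e (i, 0)) = f (e (i, 1)) := by
  let φ : Set.range f ↪ Fin n :=
    (Finite.equivFin _).toEmbedding.trans (Fin.castLEEmb hrange)
  let ψ (y : Set.range f) : {a // Set.rangeFactorization f a = y} ↪ Fin 2 :=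
    (Finite.equivFin _).toEmbedding.trans <| Fin.castLEEmb <| by
      convert hfiber y.1 using 1
      exact Nat.card_congr (Equiv.subtypeEquivRight fun a => Subtype.ext_iff)
  let ι : α ↪ Fin n × Fin 2 :=
    (Equiv.sigmaFiberEquiv (Set.rangeFactorization f)).symm.toEmbedding.trans <|
      (φ.sigmaMap ψ).trans (Equiv.sigmaEquivProd _ _).toEmbedding
  let e := Equiv.ofBijective ι (ι.injective.bijective_of_nat_card_le (by simp [hα]))
  refine ⟨e.symm, fun i => ?_⟩
  have hφ (j : Fin 2) : φ (Set.rangeFactorization f (e.symm (i, j))) = i :=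
    congrArg Prod.fst (e.apply_symm_apply (i, j))
  exact congrArg Subtype.val (φ.injective ((hφ 0).trans (hφ 1).symm))

theorem exists_perm_fin_six_pairing {β : Type*} (f : Fin 6 → β)
    (hrange : (Set.range f).ncard ≤ 3) (hfiber : ∀ b, (f ⁻¹' {b}).ncard ≤ 2) :
    ∃ e : Equiv.Perm (Fin 6), f (e 0) = f (e 1) ∧ f (e 2) = f (e 3) ∧ f (e 4) = f (e 5) := by
  obtain ⟨e, he⟩ := exists_prod_fin_two_equiv_of_ncard_fiber_le_two f (by simp) hrange hfiber
  exact ⟨finProdFinEquiv.symm.trans e, he 0, he 1, he 2⟩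

section Lines

variable {K V : Type*} [DivisionRing K] [AddCommGroup V] [Module K V]

theorem Submodule.span_singleton_eq_of_mem {x y : V} (hy : y ≠ 0) (h : y ∈ K ∙ x) :
    K ∙ y = K ∙ x := by
  obtain ⟨a, rfl⟩ := mem_span_singleton.1 h
  exact span_singleton_smul_eq (IsUnit.mk0 a (left_ne_zero_of_smul hy)) x

theorem LinearIndependent.notMem_span_pair {x y w : V} (h : LinearIndependent K ![w, x, y]) :
    w ∉ span K {x, y} := by
  have := (linearIndependent_finCons.1 h).2
  rwa [Matrix.range_cons_cons_empty] at this

theorem Submodule.span_pair_eq_span_pair_of_span_pair_eq {p x y : V} (hy : y ∉ K ∙ x)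
    (h : span K {p, x} = span K {p, y}) : span K {p, x} = span K {x, y} := by
  have hyp : y ∈ span K {p, x} := h ▸ subset_span (Set.mem_insert_of_mem _ rfl)
  have hpxy : p ∈ span K {y, x} := mem_span_insert_exchange hyp hy
  refine le_antisymm (span_le.2 ?_) (span_le.2 ?_)
  · exact Set.insert_subset (Set.pair_comm x y ▸ hpxy)
      (Set.singleton_subset_iff.2 (subset_span (by simp)))
  · exact Set.insert_subset (subset_span (by simp)) (Set.singleton_subset_iff.2 hyp)

theorem Submodule.mem_span_pair_of_span_pair_eq {p x y : V} (hy : y ∉ K ∙ x)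
    (h : span K {p, x} = span K {p, y}) : p ∈ span K {x, y} :=
  span_pair_eq_span_pair_of_span_pair_eq hy h ▸ subset_span (Set.mem_insert _ _)

end Lines

section Configuration

variable {K V ι : Type*} [DivisionRing K] [AddCommGroup V] [Module K V] {z : ι → V}

theorem injOn_span_pair_of_mem_span_singleton (hline : ∀ i j, i ≠ j → z j ∉ K ∙ z i)
    (hcol : ∀ i j l, i ≠ j → j ≠ l → i ≠ l → z l ∉ span K {z i, z j})
    {p : V} {i₀ : ι} (hi₀ : z i₀ ∈ K ∙ p) :
    Set.InjOn (fun i => span K {p, z i}) {i₀}ᶜ := by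
  intro i hi j hj hij
  by_contra hne
  refine hcol i j i₀ hne hj hi ?_
  rw [← span_pair_eq_span_pair_of_span_pair_eq (hline i j hne) hij]
  exact span_mono (Set.singleton_subset_iff.2 (Set.mem_insert _ _)) hi₀

theorem ncard_setOf_span_pair_eq_le_two [Finite ι] (hline : ∀ i j, i ≠ j → z j ∉ K ∙ z i)
    (hcol : ∀ i j l, i ≠ j → j ≠ l → i ≠ l → z l ∉ span K {z i, z j})
    (p : V) (L : Submodule K V) :
    {i | span K {p, z i} = L}.ncard ≤ 2 := by
  by_contra! h
  obtain ⟨i, j, l, rfl, hj, hl, hij, hil, hjl⟩ := (Set.two_lt_ncard_iff (Set.toFinite _)).1 h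
  refine hcol i j l hij hjl hil ?_
  rw [← span_pair_eq_span_pair_of_span_pair_eq (hline i j hij) hj.symm, ← hl]
  exact subset_span (Set.mem_insert_of_mem _ rfl)

theorem exists_perm_mem_span_pairs_of_ncard_le_three {z : Fin 6 → V}
    (hline : ∀ i j, i ≠ j → z j ∉ K ∙ z i)
    (hcol : ∀ i j l, i ≠ j → j ≠ l → i ≠ l → z l ∉ span K {z i, z j})
    {p : V} (hrange : (Set.range fun i => span K {p, z i}).ncard ≤ 3) :
    ∃ e : Equiv.Perm (Fin 6), p ∈ span K {z (e 0), z (e 1)} ∧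
      p ∈ span K {z (e 2), z (e 3)} ∧ p ∈ span K {z (e 4), z (e 5)} := by
  obtain ⟨e, h01, h23, h45⟩ :=
    exists_perm_fin_six_pairing _ hrange (ncard_setOf_span_pair_eq_le_two hline hcol p)
  have hmem {a b : Fin 6} (hab : a ≠ b) (h : span K {p, z (e a)} = span K {p, z (e b)}) :
      p ∈ span K {z (e a), z (e b)} :=
    mem_span_pair_of_span_pair_eq (hline _ _ (e.injective.ne hab)) h
  exact ⟨e, hmem (by decide) h01, hmem (by decide) h23, hmem (by decide) h45⟩

end Configuration

theorem starFree_projection_four_images_general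
    (k : Type) [Field k]
    (z : Fin 6 → Fin 3 → k) (hz : ∀ i, z i ≠ 0)
    (hdist : ∀ i j : Fin 6, Submodule.span k {z i} = Submodule.span k {z j} → i = j)
    (hcol : ∀ i j l : Fin 6, i ≠ j → j ≠ l → i ≠ l →
      LinearIndependent k ![z i, z j, z l])
    (hstar : IsStarFree z)
    (p : Fin 3 → k) (hp : p ≠ 0) :
    4 ≤ Set.ncard {L : Submodule k (Fin 3 → k) |
        ∃ i : Fin 6, Submodule.span k {z i} ≠ Submodule.span k {p} ∧
          L = Submodule.span k {p, z i}} := by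
  have hline : ∀ i j, i ≠ j → z j ∉ k ∙ z i := fun i j hij hji =>
    hij (hdist i j (span_singleton_eq_of_mem (hz j) hji).symm)
  have hcol' : ∀ i j l, i ≠ j → j ≠ l → i ≠ l → z l ∉ span k {z i, z j} :=
    fun i j l hij hjl hil => (hcol l i j hil.symm hij hjl.symm).notMem_span_pair
  have hS : {L | ∃ i, k ∙ z i ≠ k ∙ p ∧ L = span k {p, z i}} =
      (fun i => span k {p, z i}) '' {i | k ∙ z i ≠ k ∙ p} := by
    ext L; simp [eq_comm]
  rw [hS]
  by_cases hA : ∀ i, k ∙ z i ≠ k ∙ p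
  · by_contra! hlt
    obtain ⟨e, hpe⟩ := exists_perm_mem_span_pairs_of_ncard_le_three hline hcol'
      (by simpa [hA] using Nat.lt_succ_iff.1 hlt)
    exact hstar ⟨p, hp, fun i hi => hA i (span_singleton_eq_of_mem hp hi).symm, e, hpe⟩
  · obtain ⟨i₀, hi₀⟩ := not_forall_not.1 hA
    have hcompl : {i | k ∙ z i ≠ k ∙ p} = {i₀}ᶜ := by
      ext i
      rw [← hi₀, Set.mem_compl_singleton_iff]
      exact not_congr ⟨hdist i i₀, fun h => h ▸ rfl⟩
    rw [hcompl, (injOn_span_pair_of_mem_span_singleton hline hcol'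
      (hi₀ ▸ mem_span_singleton_self _)).ncard_image, Set.ncard_compl]
    simp

/-- For a star-free configuration of six points, no three collinear, the linear
projection away from any point `p` of `ℙ²(k)` maps the points of the configuration
distinct from `p` to at least 4 distinct images: the set of lines joining `p` to the
points of the configuration distinct from `p` has at least 4 elements. -/
theorem starFree_projection_four_images
    (k : Type) [Field k] [IsAlgClosed k] [CharZero k]
    (z : Fin 6 → Fin 3 → k) (hz : ∀ i, z i ≠ 0)
    (hdist : ∀ i j : Fin 6, Submodule.span k {z i} = Submodule.span k {z j} → i = j)
    (hcol : ∀ i j l : Fin 6, i ≠ j → j ≠ l → i ≠ l →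
      LinearIndependent k ![z i, z j, z l])
    (hstar : IsStarFree z)
    (p : Fin 3 → k) (hp : p ≠ 0) :
    4 ≤ Set.ncard {L : Submodule k (Fin 3 → k) |
        ∃ i : Fin 6, Submodule.span k {z i} ≠ Submodule.span k {p} ∧
          L = Submodule.span k {p, z i}} :=
  starFree_projection_four_images_general k z hz hdist hcol hstar p hp
end
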